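/- Let $\nu$ be a finite measure on $\mathbb{R}^2$ absolutely continuous with respect to Lebesgue measure, and let $K \subseteq \mathbb{R}^2$ be measurable. Then for every $0 < u < \nu(K)$, $\nu\big(\{(r,t) \in K : \nu(K \cap (\mathbb{R} \times (t, \infty))) \le u\}\big) = u$. -/

import Mathlib

/-!
Push `ν` restricted to `K` forward along the second coordinate: this gives a finite measure `μ`
on `ℝ` without atoms, and the set in question is the preimage of `T = {t | μ (Ioi t) ≤ u}`.
Continuity of `μ` from below and from above shows that `T = Ici t₀` with `t₀ = sInf T` and
`μ (Ici t₀) = u`.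
-/

open MeasureTheory ENNReal

open Set Filter Topology

theorem Set.iInter_Ioi_eq_Ici_of_lt_of_tendsto {α ι : Type*} [LinearOrder α]
    [TopologicalSpace α] [ClosedIicTopology α] {F : Filter ι} [F.NeBot] {a : α} {x : ι → α}
    (hx_lt : ∀ i, x i < a) (hx_lim : Tendsto x F (𝓝 a)) : ⋂ i, Ioi (x i) = Ici a := by
  ext s
  simp only [mem_iInter, mem_Ioi, mem_Ici]
  refine ⟨fun hs => not_lt.1 fun hsa => ?_, fun has i => (hx_lt i).trans_le has⟩
  obtain ⟨i, hi⟩ := (hx_lim.eventually (isOpen_Ioi.mem_nhds hsa)).exists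
  exact (hs i).not_gt hi

namespace MeasureTheory

variable {μ : Measure ℝ} {t : ℝ} {u : ℝ≥0∞}

theorem measure_Ioi_le_of_forall_gt (h : ∀ s, t < s → μ (Ioi s) ≤ u) : μ (Ioi t) ≤ u := by
  obtain ⟨x, hx_anti, hx_gt, hx_lim⟩ := exists_seq_strictAnti_tendsto t
  have hmono : Monotone fun n => Ioi (x n) := fun m n hmn => Ioi_subset_Ioi (hx_anti.antitone hmn)
  rw [← (isGLB_of_tendsto_atTop hx_anti.antitone hx_lim).iUnion_Ioi_eq, hmono.measure_iUnion]
  exact iSup_le fun n => h _ (hx_gt n)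

theorem le_measure_Ici_of_forall_lt [IsFiniteMeasure μ] (h : ∀ s < t, u ≤ μ (Ioi s)) :
    u ≤ μ (Ici t) := by
  obtain ⟨x, hx_mono, hx_lt, hx_lim⟩ := exists_seq_strictMono_tendsto t
  have hanti : Antitone fun n => Ioi (x n) := fun m n hmn => Ioi_subset_Ioi (hx_mono.monotone hmn)
  rw [← iInter_Ioi_eq_Ici_of_lt_of_tendsto hx_lt hx_lim,
    hanti.measure_iInter (fun _ => measurableSet_Ioi.nullMeasurableSet) ⟨0, measure_ne_top μ _⟩]
  exact le_iInf fun n => h _ (hx_lt n)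

theorem measure_setOf_measure_Ioi_le [IsFiniteMeasure μ] [NullSingletonClass μ] (hu0 : 0 < u)
    (hu : u < μ univ) : μ {s | μ (Ioi s) ≤ u} = u := by
  set T := {s | μ (Ioi s) ≤ u}
  have hT_upper : ∀ ⦃s r⦄, s ≤ r → s ∈ T → r ∈ T := fun s r hsr hs =>
    (measure_mono (Ioi_subset_Ioi hsr)).trans hs
  have hT_ne : T.Nonempty := by
    have hempty : ⋂ s : ℝ, Ioi s = ∅ :=
      eq_empty_of_forall_notMem fun s hs => lt_irrefl s (mem_iInter.1 hs s)
    have h := tendsto_measure_iInter_atTop (μ := μ) (fun _ => measurableSet_Ioi.nullMeasurableSet)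
      antitone_Ioi ⟨0, measure_ne_top μ _⟩
    rw [hempty, measure_empty] at h
    exact (h.eventually (gt_mem_nhds hu0)).exists.imp fun _ => le_of_lt
  have hT_bdd : BddBelow T := by
    obtain ⟨b, hb⟩ :=
      eventually_atBot.1 ((tendsto_measure_Ici_atBot μ).eventually (lt_mem_nhds hu))
    refine ⟨b, fun r hr => not_lt.1 fun hrb => (hb r hrb.le).not_ge ?_⟩
    rwa [← measure_congr Ioi_ae_eq_Ici]
  have hglb := isGLB_csInf hT_ne hT_bdd
  set t₀ := sInf T
  have ht₀ : t₀ ∈ T := measure_Ioi_le_of_forall_gt fun s hs => by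
    obtain ⟨r, hr, -, hrs⟩ := hglb.exists_between hs
    exact hT_upper hrs.le hr
  have hT_eq : T = Ici t₀ :=
    Subset.antisymm (fun _ hs => hglb.1 hs) fun _ hs => hT_upper hs ht₀
  have hu_le : u ≤ μ (Ici t₀) :=
    le_measure_Ici_of_forall_lt fun s hs => le_of_lt (not_le.1 fun hsT => (hglb.1 hsT).not_gt hs)
  have hIci : μ (Ici t₀) = μ (Ioi t₀) := measure_congr Ioi_ae_eq_Ici.symm
  rw [hT_eq, hIci]
  exact le_antisymm ht₀ (hIci ▸ hu_le)

theorem nullSingletonClass_map_snd {α β : Type*} [MeasurableSpace α] [MeasurableSpace β]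
    [MeasurableSingletonClass β] {μ : Measure α} {ν : Measure β} [SFinite ν]
    [NullSingletonClass ν] {ρ : Measure (α × β)} (hρ : ρ ≪ μ.prod ν) :
    NullSingletonClass (ρ.map Prod.snd) where
  measure_singleton t := by
    rw [Measure.map_apply measurable_snd (measurableSet_singleton t), ← univ_prod]
    exact hρ (by rw [Measure.prod_prod, measure_singleton, mul_zero])

end MeasureTheory

theorem stmt8_general (ν : Measure (ℝ × ℝ)) [IsFiniteMeasure ν] (hac : ν ≪ volume)
    (K : Set (ℝ × ℝ)) (u : ℝ≥0∞) (hu0 : 0 < u) (hu : u < ν K) :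
    ν {p : ℝ × ℝ | p ∈ K ∧ ν (K ∩ {q : ℝ × ℝ | p.2 < q.2}) ≤ u} = u := by
  set μ := (ν.restrict K).map Prod.snd
  have hμ : ∀ s, MeasurableSet s → μ s = ν (K ∩ Prod.snd ⁻¹' s) := fun s hs => by
    rw [Measure.map_apply measurable_snd hs, Measure.restrict_apply (measurable_snd hs), inter_comm]
  have : NullSingletonClass μ := nullSingletonClass_map_snd (μ := volume) (ν := volume) <| by
    rw [← Measure.volume_eq_prod]
    exact (Measure.absolutelyContinuous_of_le Measure.restrict_le_self).trans hac
  have hT : MeasurableSet {s | μ (Ioi s) ≤ u} :=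
    measurableSet_le (Antitone.measurable fun _ _ h => measure_mono (Ioi_subset_Ioi h))
      measurable_const
  have hset : {p | p ∈ K ∧ ν (K ∩ {q | p.2 < q.2}) ≤ u} =
      K ∩ Prod.snd ⁻¹' {s | μ (Ioi s) ≤ u} := by
    ext p
    simp only [mem_inter_iff, mem_preimage, mem_ofPred_eq, hμ _ measurableSet_Ioi]
    rfl
  rw [hset, ← hμ _ hT]
  refine measure_setOf_measure_Ioi_le hu0 ?_
  rwa [hμ _ MeasurableSet.univ, preimage_univ, inter_univ]

/-- for a finite measure `ν` on `ℝ²` absolutely continuous with respect to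
Lebesgue measure, a measurable `K` and `0 < u < ν(K)`,
`ν({(r,t) ∈ K : ν(K ∩ (ℝ × (t,∞))) ≤ u}) = u`. -/
theorem stmt8 (ν : Measure (ℝ × ℝ)) [IsFiniteMeasure ν] (hac : ν ≪ volume)
    (K : Set (ℝ × ℝ)) (hK : MeasurableSet K) (u : ℝ≥0∞) (hu0 : 0 < u) (hu : u < ν K) :
    ν {p : ℝ × ℝ | p ∈ K ∧ ν (K ∩ {q : ℝ × ℝ | p.2 < q.2}) ≤ u} = u :=
  stmt8_general ν hac K u hu0 hu
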